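/- If A ↔ B is a theorem of the system S_{¬,∧,∨} (associativity and commutativity of ∧ and ∨, double negation, De Morgan, closed under symmetry, transitivity, and congruence), then A and B are letter-homogeneous: for every letter p, p occurs in A exactly as many times as it occurs in B. -/
import Mathlib


inductive Form where
  | var : ℕ → Form
  | top : Form
  | bot : Form
  | neg : Form → Form
  | and : Form → Form → Form
  | or  : Form → Form → Form
deriving DecidableEq

namespace Form

def eval (v : ℕ → Bool) : Form → Bool
  | var n => v n
  | top => true
  | bot => false
  | neg A => !(A.eval v)
  | and A B => A.eval v && B.eval v
  | or A B => A.eval v || B.eval v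

def letters : Form → Multiset ℕ
  | var n => {n}
  | top => 0
  | bot => 0
  | neg A => A.letters
  | and A B => A.letters + B.letters
  | or A B => A.letters + B.letters

end Form

/-- `A ↔ B` is a tautology. -/
def TautEquiv (A B : Form) : Prop := ∀ v : ℕ → Bool, A.eval v = B.eval v

/-- `A` is a tautology. -/
def Taut (A : Form) : Prop := ∀ v : ℕ → Bool, A.eval v = true

/-- every letter occurs at most once -/
def Diversified (A : Form) : Prop := A.letters.Nodup

/-- built from letters using only ∧ and ∨ -/
def IsAndOr : Form → Prop
  | .var _ => True
  | .and A B => IsAndOr A ∧ IsAndOr B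
  | .or A B => IsAndOr A ∧ IsAndOr B
  | _ => False

/-- the formal system S_{¬,∧,∨} -/
inductive SderN : Form → Form → Prop
  | refl (A : Form) : SderN A A
  | assocAnd (A B C : Form) : SderN ((A.and B).and C) (A.and (B.and C))
  | assocOr  (A B C : Form) : SderN ((A.or B).or C) (A.or (B.or C))
  | commAnd (A B : Form) : SderN (A.and B) (B.and A)
  | commOr  (A B : Form) : SderN (A.or B) (B.or A)
  | negneg (A : Form) : SderN (Form.neg (Form.neg A)) A
  | deMorganAnd (A B : Form) : SderN (Form.neg (A.and B)) ((Form.neg A).or (Form.neg B))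
  | deMorganOr  (A B : Form) : SderN (Form.neg (A.or B)) ((Form.neg A).and (Form.neg B))
  | symm : SderN A B → SderN B A
  | trans : SderN A B → SderN B C → SderN A C
  | congAnd : SderN A B → SderN C D → SderN (A.and C) (B.and D)
  | congOr  : SderN A B → SderN C D → SderN (A.or C) (B.or D)
  | congNeg : SderN A B → SderN (Form.neg A) (Form.neg B)

theorem stmt18 (A B : Form) (h : SderN A B) :
    ∀ p : ℕ, A.letters.count p = B.letters.count p := by
  have key : A.letters = B.letters := by
    induction h with
    | refl => rfl
    | assocAnd A B C => simp [Form.letters, add_assoc]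
    | assocOr A B C => simp [Form.letters, add_assoc]
    | commAnd A B => simp [Form.letters, add_comm]
    | commOr A B => simp [Form.letters, add_comm]
    | negneg A => rfl
    | deMorganAnd A B => rfl
    | deMorganOr A B => rfl
    | symm _ ih => exact ih.symm
    | trans _ _ ih1 ih2 => exact ih1.trans ih2
    | congAnd _ _ ih1 ih2 => simp [Form.letters, ih1, ih2]
    | congOr _ _ ih1 ih2 => simp [Form.letters, ih1, ih2]
    | congNeg _ ih => exact ih
  intro p; rw [key]
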